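/- Let k be a field of characteristic zero and (R,Δ) a commutative differential k-algebra with R noetherian. Then the rule π(Q) = (Q:Δ) defines a continuous retraction π : spec R → Δ-spec R (i.e., π is continuous and restricts to the identity on Δ-spec R ⊆ spec R), and the Zariski topology on Δ-spec R equals the quotient topology induced by π: a subset W ⊆ Δ-spec R is closed if and only if π^{-1}(W) is closed in spec R. -/

import Mathlib

section Defs

variable {k R : Type*} [CommRing k] [CommRing R] [Algebra k R]

/-- An ideal stable under all derivations in `Δ`. -/
def IsDeltaIdeal (Δ : Set (Derivation k R R)) (I : Ideal R) : Prop :=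
  ∀ δ ∈ Δ, ∀ x ∈ I, δ x ∈ I

/-- The `Δ`-core of an ideal `J`: the largest `Δ`-stable ideal contained in `J`. -/
def deltaCore (Δ : Set (Derivation k R R)) (J : Ideal R) : Ideal R :=
  sSup {I : Ideal R | IsDeltaIdeal Δ I ∧ I ≤ J}

/-- A `Δ`-prime ideal: a proper `Δ`-ideal `Q` such that whenever a product of two
`Δ`-ideals lies in `Q`, one of them lies in `Q`. -/
def IsDeltaPrime (Δ : Set (Derivation k R R)) (Q : Ideal R) : Prop :=
  Q ≠ ⊤ ∧ IsDeltaIdeal Δ Q ∧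
    ∀ I J : Ideal R, IsDeltaIdeal Δ I → IsDeltaIdeal Δ J → I * J ≤ Q → I ≤ Q ∨ J ≤ Q

/-- A `Δ`-primitive ideal: the `Δ`-core of a maximal ideal. -/
def IsDeltaPrimitive (Δ : Set (Derivation k R R)) (P : Ideal R) : Prop :=
  ∃ M : Ideal R, M.IsMaximal ∧ deltaCore Δ M = P

end Defs

/-!
The core of a prime is Δ-prime and fixes Δ-ideals, and `I ≤ (Q:Δ)` iff the Δ-closure of `I`
lies in `Q`, so the preimage of a closed set of Δ-spec is a zero locus. For the quotient
topology, Δ-primes must be points of spec: in characteristic zero the radical of a Δ-ideal and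
the minimal primes over it are again Δ-ideals, and in a noetherian ring a power of the product
of the minimal primes of a Δ-prime `Q` lies in `Q`, so one of them is contained in, hence
equal to, `Q`.
-/
section Core

variable {k R : Type*} [CommRing k] [CommRing R] [Algebra k R] {Δ : Set (Derivation k R R)}

lemma isDeltaIdeal_sSup {S : Set (Ideal R)} (hS : ∀ I ∈ S, IsDeltaIdeal Δ I) :
    IsDeltaIdeal Δ (sSup S) := by
  intro δ hδ x hx
  rw [sSup_eq_iSup'] at hx ⊢
  refine Submodule.iSup_induction _ (motive := fun x => δ x ∈ _) hx
    (fun I x hx => Submodule.mem_iSup_of_mem I (hS I I.2 δ hδ x hx)) (by simp) fun x y hx hy => ?_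
  rw [map_add]
  exact add_mem hx hy

lemma isDeltaIdeal_sInf {S : Set (Ideal R)} (hS : ∀ I ∈ S, IsDeltaIdeal Δ I) :
    IsDeltaIdeal Δ (sInf S) := fun δ hδ x hx =>
  Submodule.mem_sInf.mpr fun I hI => hS I hI δ hδ x (Submodule.mem_sInf.mp hx I hI)

lemma isDeltaIdeal_mul {I J : Ideal R} (hI : IsDeltaIdeal Δ I) (hJ : IsDeltaIdeal Δ J) :
    IsDeltaIdeal Δ (I * J) := by
  intro δ hδ x hx
  refine Submodule.mul_induction_on hx (fun a ha b hb => ?_) fun x y hx hy => ?_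
  · rw [Derivation.leibniz, smul_eq_mul, smul_eq_mul, mul_comm b]
    exact add_mem (Ideal.mul_mem_mul ha (hJ δ hδ b hb)) (Ideal.mul_mem_mul (hI δ hδ a ha) hb)
  · rw [map_add]
    exact add_mem hx hy

lemma isDeltaIdeal_prod {ι : Type*} (s : Finset ι) {f : ι → Ideal R}
    (hf : ∀ i ∈ s, IsDeltaIdeal Δ (f i)) : IsDeltaIdeal Δ (∏ i ∈ s, f i) :=
  Finset.prod_induction f (IsDeltaIdeal Δ) (fun _ _ => isDeltaIdeal_mul)
    (fun _ _ _ _ => by simp) hf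

lemma isDeltaIdeal_deltaCore (J : Ideal R) : IsDeltaIdeal Δ (deltaCore Δ J) :=
  isDeltaIdeal_sSup fun _ hI => hI.1

lemma deltaCore_le (J : Ideal R) : deltaCore Δ J ≤ J :=
  sSup_le fun _ hI => hI.2

lemma IsDeltaIdeal.le_deltaCore {I J : Ideal R} (hI : IsDeltaIdeal Δ I) (hIJ : I ≤ J) :
    I ≤ deltaCore Δ J :=
  le_sSup ⟨hI, hIJ⟩

lemma IsDeltaIdeal.deltaCore_eq {I : Ideal R} (hI : IsDeltaIdeal Δ I) : deltaCore Δ I = I :=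
  (deltaCore_le I).antisymm (hI.le_deltaCore le_rfl)

lemma Ideal.IsPrime.isDeltaPrime_deltaCore {P : Ideal R} (hP : P.IsPrime) :
    IsDeltaPrime Δ (deltaCore Δ P) := by
  refine ⟨fun h => hP.ne_top (top_le_iff.mp (h ▸ deltaCore_le P)), isDeltaIdeal_deltaCore P,
    fun I J hI hJ hIJ => ?_⟩
  rcases hP.mul_le.mp (hIJ.trans (deltaCore_le P)) with h | h
  · exact Or.inl (hI.le_deltaCore h)
  · exact Or.inr (hJ.le_deltaCore h)

lemma IsDeltaPrime.exists_le_of_prod_le {Q : Ideal R} (hQ : IsDeltaPrime Δ Q) {ι : Type*}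
    (s : Finset ι) {f : ι → Ideal R} (hf : ∀ i ∈ s, IsDeltaIdeal Δ (f i))
    (hle : ∏ i ∈ s, f i ≤ Q) : ∃ i ∈ s, f i ≤ Q := by
  classical
  induction s using Finset.induction_on with
  | empty => exact absurd (top_le_iff.mp (by simpa using hle)) hQ.1
  | insert i s hi ih =>
    rw [Finset.prod_insert hi] at hle
    rcases hQ.2.2 _ _ (hf i (s.mem_insert_self i))
      (isDeltaIdeal_prod s fun j hj => hf j (Finset.mem_insert_of_mem hj)) hle with h | h
    · exact ⟨i, s.mem_insert_self i, h⟩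
    · obtain ⟨j, hj, hjQ⟩ := ih (fun j hj => hf j (Finset.mem_insert_of_mem hj)) h
      exact ⟨j, Finset.mem_insert_of_mem hj, hjQ⟩

lemma IsDeltaPrime.le_of_pow_le {Q I : Ideal R} (hQ : IsDeltaPrime Δ Q) (hI : IsDeltaIdeal Δ I)
    {m : ℕ} (hle : I ^ m ≤ Q) : I ≤ Q := by
  rw [← Finset.card_range m, ← Finset.prod_const] at hle
  obtain ⟨_, _, h⟩ := hQ.exists_le_of_prod_le _ (fun _ _ => hI) hle
  exact h

end Core

section Closure

variable {k R : Type*} [CommRing k] [CommRing R] [Algebra k R]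

def deltaClosure (Δ : Set (Derivation k R R)) (I : Ideal R) : Ideal R :=
  sInf {K : Ideal R | IsDeltaIdeal Δ K ∧ I ≤ K}

variable {Δ : Set (Derivation k R R)}

lemma le_deltaClosure (I : Ideal R) : I ≤ deltaClosure Δ I :=
  le_sInf fun _ hK => hK.2

lemma isDeltaIdeal_deltaClosure (I : Ideal R) : IsDeltaIdeal Δ (deltaClosure Δ I) :=
  isDeltaIdeal_sInf fun _ hK => hK.1

lemma IsDeltaIdeal.deltaClosure_le {I J : Ideal R} (hJ : IsDeltaIdeal Δ J) (hIJ : I ≤ J) :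
    deltaClosure Δ I ≤ J :=
  sInf_le ⟨hJ, hIJ⟩

lemma gc_deltaClosure_deltaCore : GaloisConnection (deltaClosure Δ) (deltaCore Δ) :=
  fun I J => ⟨fun h => (le_deltaClosure I).trans ((isDeltaIdeal_deltaClosure I).le_deltaCore h),
    fun h => ((isDeltaIdeal_deltaCore J).deltaClosure_le h).trans (deltaCore_le J)⟩

lemma isClosed_setOf_le_deltaCore (I : Ideal R) :
    IsClosed {Q : PrimeSpectrum R | I ≤ deltaCore Δ Q.asIdeal} := by
  convert PrimeSpectrum.isClosed_zeroLocus (deltaClosure Δ I : Set R) using 1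
  ext Q
  exact (gc_deltaClosure_deltaCore I Q.asIdeal).symm

end Closure

lemma Derivation.mul_map_pow {k R : Type*} [CommRing k] [CommRing R] [Algebra k R]
    (D : Derivation k R R) (a : R) (n : ℕ) : a * D (a ^ n) = n * a ^ n * D a := by
  cases n with
  | zero => simp
  | succ n => rw [Derivation.leibniz_pow, nsmul_eq_mul, smul_eq_mul]; push_cast; ring

lemma Ideal.exists_mul_pow_mem_of_mem_minimalPrimes {R : Type*} [CommRing R] {I P : Ideal R}
    (hP : P ∈ I.minimalPrimes) {x : R} (hx : x ∈ P) : ∃ s ∉ P, ∃ n : ℕ, s * x ^ n ∈ I := by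
  have := hP.isPrime
  have hrad := IsLocalization.AtPrime.radical_map_of_mem_minimalPrimes
    (Localization.AtPrime P) P I hP
  obtain ⟨n, hn⟩ := hrad ▸ Ideal.mem_map_of_mem (algebraMap R (Localization.AtPrime P)) hx
  rw [← map_pow, IsLocalization.algebraMap_mem_map_algebraMap_iff P.primeCompl] at hn
  obtain ⟨s, hs, h⟩ := hn
  exact ⟨s, hs, n, h⟩

section CharZero

variable {k R : Type*} [Field k] [CharZero k] [CommRing R] [Algebra k R]
  {Δ : Set (Derivation k R R)} {I : Ideal R}

lemma IsDeltaIdeal.pow_mul_pow_mem_of_pow_succ_mul_pow_mem (hI : IsDeltaIdeal Δ I)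
    {δ : Derivation k R R} (hδ : δ ∈ Δ) {a : R} {m s : ℕ} (h : a ^ (m + 1) * δ a ^ s ∈ I) :
    a ^ m * δ a ^ (s + 2) ∈ I := by
  set d := δ a
  have hunit : IsUnit ((m + 1 : ℕ) : R) := by
    simpa using ((Nat.cast_ne_zero (R := k)).mpr m.succ_ne_zero).isUnit.map (algebraMap k R)
  -- differentiating `a ^ (m + 1) * d ^ s` and multiplying by `d` trades one `a` for two `d`s
  have key : ((m + 1 : ℕ) : R) * (a ^ m * d ^ (s + 2)) =
      d * δ (a ^ (m + 1) * d ^ s) - s * δ d * (a ^ (m + 1) * d ^ s) := by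
    rw [Derivation.leibniz, Derivation.leibniz_pow δ a, smul_eq_mul, smul_eq_mul, nsmul_eq_mul,
      smul_eq_mul, Nat.add_sub_cancel]
    linear_combination (-a ^ (m + 1)) * δ.mul_map_pow d s
  rw [← Ideal.unit_mul_mem_iff_mem I hunit, key]
  exact sub_mem (I.mul_mem_left _ (hI δ hδ _ h)) (I.mul_mem_left _ h)

lemma IsDeltaIdeal.radical (hI : IsDeltaIdeal Δ I) : IsDeltaIdeal Δ I.radical := by
  rintro δ hδ a ⟨n, hn⟩
  have descend : ∀ j m : ℕ, a ^ (m + j) ∈ I → a ^ m * δ a ^ (2 * j) ∈ I := by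
    intro j
    induction j with
    | zero => simp
    | succ j ih =>
      intro m h
      rw [← add_assoc, add_right_comm] at h
      exact hI.pow_mul_pow_mem_of_pow_succ_mul_pow_mem hδ (ih (m + 1) h)
  exact ⟨2 * n, by simpa using descend n 0 (by simpa using hn)⟩

lemma IsDeltaIdeal.of_mem_minimalPrimes (hI : IsDeltaIdeal Δ I) {P : Ideal R}
    (hP : P ∈ I.minimalPrimes) : IsDeltaIdeal Δ P := by
  intro δ hδ x hx
  obtain ⟨s, hsP, n, hs⟩ := Ideal.exists_mul_pow_mem_of_mem_minimalPrimes hP hx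
  have hsx : s * x ∈ I.radical := ⟨n + 1, by
    rw [show (s * x) ^ (n + 1) = s ^ n * x * (s * x ^ n) by ring]
    exact I.mul_mem_left _ hs⟩
  have hδsx := hI.radical δ hδ _ hsx
  have key : s ^ 2 * δ x = s * δ (s * x) - s * x * δ s := by
    rw [Derivation.leibniz, smul_eq_mul, smul_eq_mul]; ring
  have hmem : s ^ 2 * δ x ∈ P := hP.isPrime.radical_le_iff.mpr hP.1.2 <| by
    rw [key]; exact sub_mem (I.radical.mul_mem_left _ hδsx) (I.radical.mul_mem_right _ hsx)
  exact (hP.isPrime.mem_or_mem hmem).resolve_left fun h => hsP (hP.isPrime.mem_of_pow_mem 2 h)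

end CharZero

section Noetherian

variable {k R : Type*} [Field k] [CharZero k] [CommRing R] [Algebra k R] [IsNoetherianRing R]
  {Δ : Set (Derivation k R R)}

lemma IsDeltaPrime.isPrime {Q : Ideal R} (hQ : IsDeltaPrime Δ Q) : Q.IsPrime := by
  classical
  have hfin := Q.finite_minimalPrimes_of_isNoetherianRing R
  set s := hfin.toFinset
  have hs : ∀ P ∈ s, IsDeltaIdeal Δ P := fun P hP =>
    hQ.2.1.of_mem_minimalPrimes (hfin.mem_toFinset.mp hP)
  have hprod : ∏ P ∈ s, P ≤ Q.radical := by
    rw [← Ideal.sInf_minimalPrimes, ← hfin.coe_toFinset, ← Finset.inf_id_eq_sInf]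
    exact Ideal.prod_le_inf
  obtain ⟨m, hm⟩ := Q.exists_radical_pow_le_of_fg Q.radical.fg_of_isNoetherianRing
  have := hQ.le_of_pow_le (isDeltaIdeal_prod s hs) ((pow_le_pow_left' hprod m).trans hm)
  obtain ⟨P, hP, hPQ⟩ := hQ.exists_le_of_prod_le s hs this
  have hPmin := hfin.mem_toFinset.mp hP
  exact le_antisymm hPmin.1.2 hPQ ▸ hPmin.isPrime

lemma exists_eq_setOf_isDeltaPrime_le_of_isClosed {W : Set (Ideal R)}
    (hW : W ⊆ {Q : Ideal R | IsDeltaPrime Δ Q})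
    (hC : IsClosed {Q : PrimeSpectrum R | deltaCore Δ Q.asIdeal ∈ W}) :
    ∃ I : Ideal R, W = {Q : Ideal R | IsDeltaPrime Δ Q ∧ I ≤ Q} := by
  obtain ⟨I, hI⟩ := (PrimeSpectrum.isClosed_iff_zeroLocus_ideal _).mp hC
  have key : ∀ Q, IsDeltaPrime Δ Q → (Q ∈ W ↔ I ≤ Q) := fun Q hQ => by
    have := Set.ext_iff.mp hI ⟨Q, hQ.isPrime⟩
    rwa [Set.mem_ofPred_eq, hQ.2.1.deltaCore_eq, PrimeSpectrum.mem_zeroLocus,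
      SetLike.coe_subset_coe] at this
  exact ⟨I, Set.ext fun Q => ⟨fun h => ⟨hW h, (key Q (hW h)).1 h⟩, fun h => (key Q h.1).2 h.2⟩⟩

end Noetherian

/-- For `R` noetherian, `π(Q) = (Q:Δ)` defines a continuous retraction
`π : spec R → Δ-spec R`, and the Zariski topology on `Δ-spec R` (whose closed sets are
the sets `{Q ∈ Δ-spec R : I ≤ Q}` for ideals `I`) is the quotient topology induced by
`π`: a subset `W ⊆ Δ-spec R` is closed iff `π⁻¹(W)` is closed in `spec R`. -/
theorem deltaCore_continuous_retraction_quotient_topology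
    {k R : Type*} [Field k] [CharZero k] [CommRing R] [Algebra k R] [IsNoetherianRing R]
    (Δ : Set (Derivation k R R)) :
    -- π maps spec R into Δ-spec R
    (∀ Q : PrimeSpectrum R, IsDeltaPrime Δ (deltaCore Δ Q.asIdeal)) ∧
    -- π restricts to the identity on Δ-spec R ⊆ spec R
    (∀ Q : PrimeSpectrum R, IsDeltaPrime Δ Q.asIdeal → deltaCore Δ Q.asIdeal = Q.asIdeal) ∧
    -- π is continuous: the preimage of each Zariski-closed subset of Δ-spec R is closed
    (∀ I : Ideal R, IsClosed {Q : PrimeSpectrum R | I ≤ deltaCore Δ Q.asIdeal}) ∧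
    -- the topology on Δ-spec R is the quotient topology induced by π
    (∀ W : Set (Ideal R), W ⊆ {Q : Ideal R | IsDeltaPrime Δ Q} →
      ((∃ I : Ideal R, W = {Q : Ideal R | IsDeltaPrime Δ Q ∧ I ≤ Q}) ↔
        IsClosed {Q : PrimeSpectrum R | deltaCore Δ Q.asIdeal ∈ W})) := by
  have retract (Q : PrimeSpectrum R) : IsDeltaPrime Δ (deltaCore Δ Q.asIdeal) :=
    Q.isPrime.isDeltaPrime_deltaCore
  refine ⟨retract, fun Q hQ => hQ.2.1.deltaCore_eq, isClosed_setOf_le_deltaCore,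
    fun W hW => ⟨?_, exists_eq_setOf_isDeltaPrime_le_of_isClosed hW⟩⟩
  rintro ⟨I, rfl⟩
  simpa only [Set.mem_ofPred_eq, retract, true_and] using isClosed_setOf_le_deltaCore I
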